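/- arXiv:2005.06636 — 8 statements merged into one kernel-verified Lean document; each statement's English description precedes it below -/
import Mathlib

section
/- Let c > 1, α ∈ (0,1), B > 0, β > 0, s > 0 and S > 0 with β = αBs/S. Then for y ∈ [0,β], (1/β)·[∫₀^y (-s + 2S(y-x)/(αB)) dx + ∫_y^β c·(s + 2S(y-x)/(αB)) dx] = (c-1)·y·(β-y)·S/(βαB) ≥ 0. -/
open intervalIntegral

/-- Expected-luck computation for all-pay Richman bidding: with `β = αBs/S` and
`y ∈ [0,β]`, the expectation over `x ~ Unif[0,β]` of the luck increment equals
`(c-1)·y·(β-y)·S/(β·α·B)`, which is nonnegative. -/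
theorem expected_luck_richman (c α B β s S y : ℝ) (hc : 1 < c) (hα : α ∈ Set.Ioo (0:ℝ) 1)
    (hB : 0 < B) (hs : 0 < s) (hS : 0 < S) (hβ : β = α * B * s / S) (hβpos : 0 < β)
    (hy : y ∈ Set.Icc (0:ℝ) β) :
    (1 / β) * ((∫ x in (0:ℝ)..y, (-s + 2 * S * (y - x) / (α * B)))
        + ∫ x in y..β, c * (s + 2 * S * (y - x) / (α * B)))
      = (c - 1) * y * (β - y) * S / (β * α * B)
    ∧ 0 ≤ (c - 1) * y * (β - y) * S / (β * α * B) := by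
  obtain ⟨hα0, hα1⟩ := hα
  obtain ⟨hy0, hyβ⟩ := hy
  have hαB : α * B ≠ 0 := by positivity
  have e1 : ∀ x : ℝ, -s + 2 * S * (y - x) / (α * B)
      = (-s + 2 * S * y / (α * B)) + (-(2 * S / (α * B))) * x := by
    intro x; field_simp; ring
  have e2 : ∀ x : ℝ, c * (s + 2 * S * (y - x) / (α * B))
      = (c * s + c * (2 * S * y / (α * B))) + (-(c * (2 * S / (α * B)))) * x := by
    intro x; field_simp; ring
  have h1 : (∫ x in (0:ℝ)..y, (-s + 2 * S * (y - x) / (α * B)))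
      = (-s + 2 * S * y / (α * B)) * y + (-(2 * S / (α * B))) * ((y ^ 2 - 0 ^ 2) / 2) := by
    simp_rw [e1]
    rw [intervalIntegral.integral_add (intervalIntegrable_const)
      ((intervalIntegrable_id).const_mul _), integral_const, integral_const_mul, integral_id]
    simp only [smul_eq_mul]
    ring
  have h2 : (∫ x in y..β, c * (s + 2 * S * (y - x) / (α * B)))
      = (c * s + c * (2 * S * y / (α * B))) * (β - y)
        + (-(c * (2 * S / (α * B)))) * ((β ^ 2 - y ^ 2) / 2) := by
    simp_rw [e2]
    rw [intervalIntegral.integral_add (intervalIntegrable_const)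
      ((intervalIntegrable_id).const_mul _), integral_const, integral_const_mul, integral_id]
    simp only [smul_eq_mul]
    ring
  have hsval : s = β * S / (α * B) := by
    rw [hβ]; field_simp
  constructor
  · rw [h1, h2, hsval]
    field_simp
    ring
  · apply div_nonneg
    · have : 0 ≤ (c - 1) := by linarith
      have : 0 ≤ β - y := by linarith
      positivity
    · positivity
end

section
/- Bernoulli-type step (Min wins, all-pay Richman invariant): let α ∈ (0,1), S > 0, s ≥ 0, B > 0, and suppose x, y satisfy 0 ≤ x ≤ y ≤ αBs/S (with s ≤ S). If B ≥ (1+α)^((L-H)/(2S)) for reals L, H, then B + y - x ≥ (1+α)^((L + ΔL - H + s)/(2S)), where ΔL = -s + 2S(y-x)/(αB). -/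
/-! Writing `t = (y - x)/(αB) ∈ [0, 1]`, the new exponent is the old one plus `t`, so the claim is
`(1 + α)^((L - H)/(2S)) · (1 + α)^t ≤ B (1 + tα) = B + y - x`, which is the invariant times
Bernoulli's inequality `(1 + α)^t ≤ 1 + tα` for `t ∈ [0, 1]`. -/

open Real

theorem rpow_add_le_mul_one_add_mul {a e t B : ℝ} (ha : -1 < a) (ht₀ : 0 ≤ t) (ht₁ : t ≤ 1)
    (hB : (1 + a) ^ e ≤ B) : (1 + a) ^ (e + t) ≤ B * (1 + t * a) := by
  rw [rpow_add (by linarith)]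
  exact mul_le_mul hB (rpow_one_add_le_one_add_mul_self ha.le ht₀ ht₁)
    (rpow_nonneg (by linarith) t) ((rpow_nonneg (by linarith) e).trans hB)

theorem luck_exponent_eq {S s L H d c : ℝ} (hS : S ≠ 0) :
    (L + (-s + 2 * S * d / c) - H + s) / (2 * S) = (L - H) / (2 * S) + d / c := by
  field_simp
  ring

theorem sub_div_mem_Icc_of_le_mul_div {a B s S x y : ℝ} (ha : 0 < a) (hS : 0 < S) (hsS : s ≤ S)
    (hB : 0 < B) (hx : 0 ≤ x) (hxy : x ≤ y) (hy : y ≤ a * B * s / S) :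
    (y - x) / (a * B) ∈ Set.Icc 0 1 := by
  have haB : 0 < a * B := mul_pos ha hB
  have hy' : y ≤ a * B := hy.trans <| by
    rw [div_le_iff₀ hS]
    exact mul_le_mul_of_nonneg_left hsS haB.le
  exact ⟨div_nonneg (sub_nonneg.mpr hxy) haB.le, (div_le_one haB).mpr (by linarith)⟩

theorem richman_invariant_min_wins_general (α S s B x y L H : ℝ)
    (hα : α ∈ Set.Ioo (0:ℝ) 1) (hS : 0 < S) (hsS : s ≤ S) (hB : 0 < B)
    (hx : 0 ≤ x) (hxy : x ≤ y) (hy : y ≤ α * B * s / S)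
    (hinv : B ≥ (1 + α) ^ ((L - H) / (2 * S))) :
    B + y - x ≥ (1 + α) ^ ((L + (-s + 2 * S * (y - x) / (α * B)) - H + s) / (2 * S)) := by
  obtain ⟨ht₀, ht₁⟩ := sub_div_mem_Icc_of_le_mul_div hα.1 hS hsS hB hx hxy hy
  have hstep : B * (1 + (y - x) / (α * B) * α) = B + y - x := by
    field_simp [hα.1.ne', hB.ne']
    ring
  rw [luck_exponent_eq hS.ne', ← hstep]
  exact rpow_add_le_mul_one_add_mul (by linarith [hα.1]) ht₀ ht₁ hinv

/-- Bernoulli-type step (Min wins) in the all-pay Richman invariant: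
if `B ≥ (1+α)^((L-H)/(2S))` and `0 ≤ x ≤ y ≤ αBs/S` with `s ≤ S`, then
`B + y - x ≥ (1+α)^((L + ΔL - H + s)/(2S))` where `ΔL = -s + 2S(y-x)/(αB)`. -/
theorem richman_invariant_min_wins (α S s B x y L H : ℝ)
    (hα : α ∈ Set.Ioo (0:ℝ) 1) (hS : 0 < S) (hs : 0 ≤ s) (hsS : s ≤ S) (hB : 0 < B)
    (hx : 0 ≤ x) (hxy : x ≤ y) (hy : y ≤ α * B * s / S)
    (hinv : B ≥ (1 + α) ^ ((L - H) / (2 * S))) :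
    B + y - x ≥ (1 + α) ^ ((L + (-s + 2 * S * (y - x) / (α * B)) - H + s) / (2 * S)) :=
  richman_invariant_min_wins_general α S s B x y L H hα hS hsS hB hx hxy hy hinv
end

section
/- Bernoulli-type step (Max wins, all-pay Richman invariant): let α ∈ (0,1), c = λ(α) = -log(1-α)/log(1+α), S > 0, s ≥ 0, B > 0, and suppose 0 ≤ y < x ≤ αBs/S with s ≤ S. If B ≥ (1+α)^((L-H)/(2S)), then B + y - x ≥ (1+α)^((L + ΔL - H - cs)/(2S)), where ΔL = c(s + 2S(y-x)/(αB)). -/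
/-!
Write `t = (x - y)/(αB) ∈ [0, 1]`. The new exponent is the old one minus `c t`, and
`(1+α)^(-c) = 1-α` by the choice of `c`, so the right-hand side is
`(1+α)^((L-H)/(2S)) (1-α)^t ≤ B (1 - αt) = B + y - x` by the invariant and
Bernoulli's inequality `(1-α)^t ≤ 1 - αt`.
-/

open Real Set

lemma one_add_rpow_neg_lambda {α : ℝ} (hα : α ∈ Ioo (0 : ℝ) 1) :
    (1 + α) ^ (-(-log (1 - α) / log (1 + α))) = 1 - α := by
  obtain ⟨hα₀, hα₁⟩ := hα
  rw [neg_div, neg_neg, log_div_log]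
  exact rpow_logb (by linarith) (by linarith) (by linarith)

lemma one_add_rpow_neg_lambda_mul_le {α t : ℝ} (hα : α ∈ Ioo (0 : ℝ) 1)
    (ht₀ : 0 ≤ t) (ht₁ : t ≤ 1) :
    (1 + α) ^ (-(-log (1 - α) / log (1 + α)) * t) ≤ 1 - α * t := by
  have bernoulli := rpow_one_add_le_one_add_mul_self (s := -α) (by linarith [hα.2]) ht₀ ht₁
  rw [← sub_eq_add_neg] at bernoulli
  rw [rpow_mul (by linarith [hα.1]), one_add_rpow_neg_lambda hα]
  linarith

theorem richman_invariant_max_wins_general (α c S s B x y L H : ℝ)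
    (hα : α ∈ Set.Ioo (0:ℝ) 1) (hc : c = -Real.log (1 - α) / Real.log (1 + α))
    (hS : 0 < S) (hsS : s ≤ S) (hB : 0 < B)
    (hy : 0 ≤ y) (hyx : y < x) (hx : x ≤ α * B * s / S)
    (hinv : B ≥ (1 + α) ^ ((L - H) / (2 * S))) :
    B + y - x ≥ (1 + α) ^ ((L + c * (s + 2 * S * (y - x) / (α * B)) - H - c * s) / (2 * S)) := by
  have hα₀ : α ≠ 0 := hα.1.ne'
  have hαB : 0 < α * B := mul_pos hα.1 hB
  set t := (x - y) / (α * B) with ht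
  have ht₀ : 0 ≤ t := div_nonneg (by linarith) hαB.le
  have ht₁ : t ≤ 1 := by
    have : α * B * s / S ≤ α * B := by
      rw [div_le_iff₀ hS]
      exact mul_le_mul_of_nonneg_left hsS hαB.le
    rw [div_le_one hαB]
    linarith
  have hexp : (L + c * (s + 2 * S * (y - x) / (α * B)) - H - c * s) / (2 * S)
      = (L - H) / (2 * S) + -c * t := by
    rw [ht]
    field_simp
    ring
  rw [hexp, rpow_add (by linarith [hα.1]), hc]
  calc (1 + α) ^ ((L - H) / (2 * S)) * (1 + α) ^ (-(-log (1 - α) / log (1 + α)) * t)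
      ≤ B * (1 - α * t) :=
        mul_le_mul hinv (one_add_rpow_neg_lambda_mul_le hα ht₀ ht₁)
          (rpow_nonneg (by linarith [hα.1]) _) hB.le
    _ = B + y - x := by
        rw [ht]
        field_simp
        ring

/-- Bernoulli-type step (Max wins) in the all-pay Richman invariant:
with `c = λ(α) = -log(1-α)/log(1+α)`, if `B ≥ (1+α)^((L-H)/(2S))` and
`0 ≤ y < x ≤ αBs/S` with `s ≤ S`, then
`B + y - x ≥ (1+α)^((L + ΔL - H - cs)/(2S))` where `ΔL = c(s + 2S(y-x)/(αB))`. -/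
theorem richman_invariant_max_wins (α c S s B x y L H : ℝ)
    (hα : α ∈ Set.Ioo (0:ℝ) 1) (hc : c = -Real.log (1 - α) / Real.log (1 + α))
    (hS : 0 < S) (hs : 0 ≤ s) (hsS : s ≤ S) (hB : 0 < B)
    (hy : 0 ≤ y) (hyx : y < x) (hx : x ≤ α * B * s / S)
    (hinv : B ≥ (1 + α) ^ ((L - H) / (2 * S))) :
    B + y - x ≥ (1 + α) ^ ((L + c * (s + 2 * S * (y - x) / (α * B)) - H - c * s) / (2 * S)) :=
  richman_invariant_max_wins_general α c S s B x y L H hα hc hS hsS hB hy hyx hx hinv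
end

section
/- In an all-pay Richman bidding game against any pure (deterministic) Max strategy, Min has a counter-strategy that loses at most ⌈B₀/C₀⌉ + 1 biddings, where B₀ and C₀ > 0 are the initial budgets of Max and Min. Specifically: define Min's strategy by matching Max's bid b if b ≤ C (her current budget) and bidding 0 otherwise; ties go to Min. Then along any play, the number of biddings Min loses is at most ⌈B₀/C₀⌉ + 1. -/
/-!
Under the matching strategy Min's budget never decreases, so it stays at least `C₀`. Min loses a
bidding only when Max bids more than her current budget, and then Max pays at least `C₀`; since
Max's budget stays nonnegative, this can happen at most `B₀ / C₀` times.
-/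

/-- The budgets `B` of Max and `C` of Min along a play where Max bids `b n` and Min follows the
matching strategy. -/
def IsMatchingPlay (B C b : ℕ → ℝ) : Prop :=
  ∀ n, (b n ≤ C n → B (n + 1) = B n ∧ C (n + 1) = C n) ∧
    (C n < b n → B (n + 1) = B n - b n ∧ C (n + 1) = C n + b n)

namespace IsMatchingPlay

variable {B C b : ℕ → ℝ}

theorem minBudget_monotone (hplay : IsMatchingPlay B C b) (hb : ∀ n, 0 ≤ b n) : Monotone C := by
  refine monotone_nat_of_le_succ fun n => ?_
  rcases le_or_gt (b n) (C n) with hmatch | hloss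
  · exact ((hplay n).1 hmatch).2.ge
  · linarith [((hplay n).2 hloss).2, hb n]

theorem maxBudget_succ_add_le {c : ℝ} {n : ℕ} (hplay : IsMatchingPlay B C b) (hc : c ≤ C n) :
    B (n + 1) + (if C n < b n then c else 0) ≤ B n := by
  split_ifs with hloss
  · linarith [((hplay n).2 hloss).1]
  · simp [((hplay n).1 (not_lt.1 hloss)).1]

theorem maxBudget_add_count_mul_le {c : ℝ} (hplay : IsMatchingPlay B C b) (hc : ∀ n, c ≤ C n)
    (n : ℕ) : B n + Nat.count (fun i => C i < b i) n * c ≤ B 0 := by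
  induction n with
  | zero => simp
  | succ n ih =>
    have hstep := hplay.maxBudget_succ_add_le (hc n)
    rw [Nat.count_succ]
    split_ifs at hstep ⊢ <;> push_cast <;> linarith

end IsMatchingPlay

theorem richman_pure_useless_general (B C b : ℕ → ℝ) (B₀ C₀ : ℝ)
    (hB0 : B 0 = B₀) (hC0 : C 0 = C₀) (hC₀ : 0 < C₀)
    (hlegal : ∀ n, 0 ≤ b n ∧ b n ≤ B n)
    (hupd : ∀ n, (b n ≤ C n → B (n + 1) = B n ∧ C (n + 1) = C n) ∧
      (C n < b n → B (n + 1) = B n - b n ∧ C (n + 1) = C n + b n)) :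
    ∀ n, ((Finset.range n).filter (fun i => C i < b i)).card ≤ ⌈B₀ / C₀⌉₊ + 1 := by
  intro n
  have hplay : IsMatchingPlay B C b := hupd
  have hC : ∀ m, C₀ ≤ C m := fun m =>
    hC0 ▸ hplay.minBudget_monotone (fun i => (hlegal i).1) (Nat.zero_le m)
  have hbudget := hplay.maxBudget_add_count_mul_le hC n
  have hBn : 0 ≤ B n := (hlegal n).1.trans (hlegal n).2
  have hcount : (Nat.count (fun i => C i < b i) n : ℝ) ≤ B₀ / C₀ := by
    rw [le_div_iff₀ hC₀]
    linarith
  rw [← Nat.count_eq_card_filter_range]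
  exact Nat.le_succ_of_le (Nat.cast_le.1 (hcount.trans (Nat.le_ceil _)))

/-- Against any pure Max strategy in an all-pay Richman bidding game, Min's
matching strategy (match Max's bid `b` when `b ≤ C`, else bid `0`; ties to Min)
loses at most `⌈B₀/C₀⌉ + 1` biddings. -/
theorem richman_pure_useless (B C b : ℕ → ℝ) (B₀ C₀ : ℝ)
    (hB0 : B 0 = B₀) (hC0 : C 0 = C₀) (hB₀ : 0 ≤ B₀) (hC₀ : 0 < C₀)
    (hlegal : ∀ n, 0 ≤ b n ∧ b n ≤ B n)
    (hupd : ∀ n, (b n ≤ C n → B (n + 1) = B n ∧ C (n + 1) = C n) ∧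
      (C n < b n → B (n + 1) = B n - b n ∧ C (n + 1) = C n + b n)) :
    ∀ n, ((Finset.range n).filter (fun i => C i < b i)).card ≤ ⌈B₀ / C₀⌉₊ + 1 :=
  richman_pure_useless_general B C b B₀ C₀ hB0 hC0 hC₀ hlegal hupd
end

section
/- Poorman-to-asymmetric simulation inequality: let B, C, W > 0 with B/C − W ≥ B̃ ≥ 0, and let x̃ ∈ [0, B̃], ỹ ∈ [0,1]. Set x = x̃·C and y = ỹ·C, and assume y < C. Then (B − x)/(C − y) − W ≥ B̃ − x̃ + W·ỹ. -/
/-- Poorman-to-asymmetric simulation inequality: the invariant `B/C - W ≥ B̃`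
is preserved under the all-pay poorman budget update when Max simulates the
`W`-asymmetric game. -/
theorem poorman_asymmetric_simulation (B C W Bt xt yt : ℝ)
    (hB : 0 < B) (hC : 0 < C) (hW : 0 < W)
    (hBt : 0 ≤ Bt) (hinv : B / C - W ≥ Bt)
    (hxt : xt ∈ Set.Icc (0:ℝ) Bt) (hyt : yt ∈ Set.Icc (0:ℝ) 1)
    (hy : yt * C < C) :
    (B - xt * C) / (C - yt * C) - W ≥ Bt - xt + W * yt := by
  obtain ⟨hx0, hx1⟩ := hxt
  obtain ⟨hy0, hy1⟩ := hyt
  have hden : 0 < C - yt * C := by linarith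
  have hB' : B ≥ (W + Bt) * C := by
    have := (le_div_iff₀ hC).mp (by linarith : W + Bt ≤ B / C)
    linarith
  rw [ge_iff_le, ← sub_nonneg]
  have key : (Bt - xt + W * yt + W) * (C - yt * C) ≤ B - xt * C := by
    nlinarith [mul_nonneg (mul_nonneg hy0 hy0) hW.le,
      mul_nonneg hy0 (sub_nonneg.mpr hx1), mul_nonneg (mul_nonneg hy0 hy0) hC.le,
      mul_nonneg hy0 hC.le]
  have := (le_div_iff₀ hden).mpr key
  linarith
end

section
/- Invariant step for pure asymmetric strategy (Max loses): let W > 1, ν = W − 1, α ∈ (0,1), N = max(S, νS) for S > 0, let s ∈ [0,S], B > 0, x = (s/N)·α·B, and y ≥ x. If B ≥ B₀·(1+α)^(−H/N), then B − x + Wy ≥ B₀·(1+α)^(−(H − νs)/N). -/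
/-!
Write `ν = W - 1` and `p = νs/N ∈ [0, 1]`. Since `y ≥ x`, Max's new budget is at least
`B + νx = B(1 + pα)`, and Bernoulli's inequality for the exponent `p ≤ 1` gives
`1 + pα ≥ (1 + α)^p`; multiplying the invariant `B ≥ B₀(1 + α)^(-H/N)` by `(1 + α)^p`
moves the exponent from `-H/N` to `-H/N + p = -(H - νs)/N`.
-/

lemma mul_rpow_add_le_mul_one_add_mul {α B B₀ e p : ℝ} (hα : -1 < α) (hp₀ : 0 ≤ p)
    (hp₁ : p ≤ 1) (hB : 0 ≤ B) (hinv : B₀ * (1 + α) ^ e ≤ B) :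
    B₀ * (1 + α) ^ (e + p) ≤ B * (1 + p * α) := by
  have hbase : 0 < 1 + α := by linarith
  calc B₀ * (1 + α) ^ (e + p) = B₀ * (1 + α) ^ e * (1 + α) ^ p := by
        rw [Real.rpow_add hbase, mul_assoc]
    _ ≤ B * (1 + α) ^ p := by gcongr
    _ ≤ B * (1 + p * α) := by gcongr; exact rpow_one_add_le_one_add_mul_self hα.le hp₀ hp₁

lemma div_max_self_mul_mem_Icc {ν s S : ℝ} (hν : 0 ≤ ν) (hs₀ : 0 ≤ s) (hsS : s ≤ S) :
    ν * s / max S (ν * S) ∈ Set.Icc (0 : ℝ) 1 := by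
  have hνs : ν * s ≤ max S (ν * S) :=
    (mul_le_mul_of_nonneg_left hsS hν).trans (le_max_right _ _)
  have hN : 0 ≤ max S (ν * S) := (mul_nonneg hν hs₀).trans hνs
  exact ⟨div_nonneg (mul_nonneg hν hs₀) hN, div_le_one_of_le₀ hνs hN⟩

theorem asymmetric_invariant_max_loses_general (W α S s B B₀ H y : ℝ) (hW : 1 < W)
    (hα : α ∈ Set.Ioo (0:ℝ) 1) (hs : s ∈ Set.Icc (0:ℝ) S)
    (hB : 0 < B)
    (hy : y ≥ (s / max S ((W - 1) * S)) * α * B)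
    (hinv : B ≥ B₀ * (1 + α) ^ (-H / max S ((W - 1) * S))) :
    B - (s / max S ((W - 1) * S)) * α * B + W * y
      ≥ B₀ * (1 + α) ^ (-(H - (W - 1) * s) / max S ((W - 1) * S)) := by
  set N := max S ((W - 1) * S)
  obtain ⟨hp₀, hp₁⟩ := div_max_self_mul_mem_Icc (sub_nonneg.2 hW.le) hs.1 hs.2
  calc B₀ * (1 + α) ^ (-(H - (W - 1) * s) / N)
        = B₀ * (1 + α) ^ (-H / N + (W - 1) * s / N) := by ring_nf
    _ ≤ B * (1 + (W - 1) * s / N * α) :=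
        mul_rpow_add_le_mul_one_add_mul (by linarith [hα.1]) hp₀ hp₁ hB.le hinv
    _ = B - s / N * α * B + W * (s / N * α * B) := by ring
    _ ≤ B - s / N * α * B + W * y := by gcongr

/-- Invariant step for the pure asymmetric strategy when Max loses: with
`ν = W - 1`, `N = max S (νS)`, `x = (s/N)·α·B` and `y ≥ x`, the invariant
`B ≥ B₀·(1+α)^(-H/N)` yields `B - x + Wy ≥ B₀·(1+α)^(-(H - νs)/N)`. -/
theorem asymmetric_invariant_max_loses (W α S s B B₀ H y : ℝ) (hW : 1 < W)
    (hα : α ∈ Set.Ioo (0:ℝ) 1) (hS : 0 < S) (hs : s ∈ Set.Icc (0:ℝ) S)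
    (hB : 0 < B) (hB₀ : 0 < B₀)
    (hy : y ≥ (s / max S ((W - 1) * S)) * α * B)
    (hinv : B ≥ B₀ * (1 + α) ^ (-H / max S ((W - 1) * S))) :
    B - (s / max S ((W - 1) * S)) * α * B + W * y
      ≥ B₀ * (1 + α) ^ (-(H - (W - 1) * s) / max S ((W - 1) * S)) :=
  asymmetric_invariant_max_loses_general W α S s B B₀ H y hW hα hs hB hy hinv
end

section
/- Invariant step for pure asymmetric strategy (Max wins): let W > 1, μ > 1, α ∈ (0,1) with 1 − α = (1+α)^(−μ), N = max(S, (W−1)S) for S > 0, s ∈ [0,S], B > 0, x = (s/N)·α·B, y ≥ 0. If B ≥ B₀·(1+α)^(−H/N), then B − x + Wy ≥ B₀·(1+α)^(−(H + μs)/N). -/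
/-! Writing `t = s/N ∈ [0,1]`, the identity `1 - α = (1+α)^(-μ)` turns the extra factor
`(1+α)^(-μs/N)` of the target into `(1-α)^t`, and Bernoulli's inequality for exponents in
`[0,1]` bounds it by `1 - tα`, the fraction of the budget Max keeps. -/

open Real

lemma one_sub_rpow_le_one_sub_mul {α t : ℝ} (hα : α ≤ 1) (ht₀ : 0 ≤ t) (ht₁ : t ≤ 1) :
    (1 - α) ^ t ≤ 1 - t * α := by
  simpa only [sub_eq_add_neg, mul_neg] using
    rpow_one_add_le_one_add_mul_self (s := -α) (neg_le_neg hα) ht₀ ht₁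

lemma rpow_neg_mul_div_eq_rpow_neg_rpow {b : ℝ} (hb : 0 ≤ b) (μ s N : ℝ) :
    b ^ (-(μ * s) / N) = (b ^ (-μ)) ^ (s / N) := by
  rw [← rpow_mul hb]
  ring_nf

theorem asymmetric_invariant_max_wins_general (W μ α S s B B₀ H y : ℝ) (hW : 1 < W)
    (hα : α ∈ Set.Ioo (0:ℝ) 1) (hαμ : 1 - α = (1 + α) ^ (-μ))
    (hS : 0 < S) (hs : s ∈ Set.Icc (0:ℝ) S) (hB : 0 < B)
    (hy : 0 ≤ y)
    (hinv : B ≥ B₀ * (1 + α) ^ (-H / max S ((W - 1) * S))) :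
    B - (s / max S ((W - 1) * S)) * α * B + W * y
      ≥ B₀ * (1 + α) ^ (-(H + μ * s) / max S ((W - 1) * S)) := by
  obtain ⟨hα₀, hα₁⟩ := hα
  set N := max S ((W - 1) * S)
  have hN : 0 < N := hS.trans_le (le_max_left _ _)
  have ht₀ : 0 ≤ s / N := div_nonneg hs.1 hN.le
  have ht₁ : s / N ≤ 1 := (div_le_one hN).2 (hs.2.trans (le_max_left _ _))
  have hbase : 0 < 1 + α := by linarith
  have hstep : (1 + α) ^ (-(μ * s) / N) ≤ 1 - s / N * α := by
    rw [rpow_neg_mul_div_eq_rpow_neg_rpow hbase.le, ← hαμ]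
    exact one_sub_rpow_le_one_sub_mul hα₁.le ht₀ ht₁
  have hsplit : (1 + α) ^ (-(H + μ * s) / N) = (1 + α) ^ (-H / N) * (1 + α) ^ (-(μ * s) / N) := by
    rw [← rpow_add hbase]
    ring_nf
  have hWy : 0 ≤ W * y := mul_nonneg (by linarith) hy
  calc B₀ * (1 + α) ^ (-(H + μ * s) / N)
      = B₀ * (1 + α) ^ (-H / N) * (1 + α) ^ (-(μ * s) / N) := by rw [hsplit, mul_assoc]
    _ ≤ B * (1 - s / N * α) := mul_le_mul hinv hstep (rpow_nonneg hbase.le _) hB.le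
    _ ≤ B - s / N * α * B + W * y := by linarith

/-- Invariant step for the pure asymmetric strategy when Max wins: with
`1 - α = (1+α)^(-μ)`, `N = max S ((W-1)S)`, `x = (s/N)·α·B` and `y ≥ 0`, the
invariant `B ≥ B₀·(1+α)^(-H/N)` yields `B - x + Wy ≥ B₀·(1+α)^(-(H + μs)/N)`. -/
theorem asymmetric_invariant_max_wins (W μ α S s B B₀ H y : ℝ) (hW : 1 < W)
    (hμ : 1 < μ) (hα : α ∈ Set.Ioo (0:ℝ) 1) (hαμ : 1 - α = (1 + α) ^ (-μ))
    (hS : 0 < S) (hs : s ∈ Set.Icc (0:ℝ) S) (hB : 0 < B) (hB₀ : 0 < B₀)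
    (hy : 0 ≤ y)
    (hinv : B ≥ B₀ * (1 + α) ^ (-H / max S ((W - 1) * S))) :
    B - (s / max S ((W - 1) * S)) * α * B + W * y
      ≥ B₀ * (1 + α) ^ (-(H + μ * s) / max S ((W - 1) * S)) :=
  asymmetric_invariant_max_wins_general W μ α S s B B₀ H y hW hα hαμ hS hs hB hy hinv
end

section
/- Expected luck is nonnegative for the W > 1 asymmetric mixed strategy (uniform case): let W > 1, ε > 0, μ = 1 + ε, ν = 2W − 1, s > 0, S ≥ s, α ∈ (0,1), B > 0, β = (s/(W·S))·α·B, and y ∈ [0, β/W] (so Wy ≤ β). Then (1/β)·∫₀^β ΔL(x,y) dx ≥ 0, where ΔL(x,y) = 2s(Wy−x)/β − νs if x ≤ y, ΔL(x,y) = 2s(Wy−x)/β + μs if y < x ≤ Wy, and ΔL(x,y) = 2μs(Wy−x)/β + μs if x > Wy. Moreover the integral decomposes as S + T + U with S = 0, T = (β−y)εs, U = (2Wy − β − W²y²/β)εs, and S + T + U = ((2W−1) − W²y/β)εsy ≥ ((β − Wy)/β)·Wεsy ≥ 0. -/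
/-!
On each of the pieces `0 < x ≤ y`, `y < x ≤ Wy` and `Wy < x ≤ β` the luck increment is affine
in `x`, so its integral over `[0, β]` is a sum of three elementary integrals, which add up to
`((2W - 1) - W²y/β)·ε·s·y`. The coefficient is `W(β - Wy)/β + (W - 1)`, nonnegative because
`Wy ≤ β` and `W ≥ 1`.
-/

open MeasureTheory Set

open scoped Interval

theorem integral_mul_add_const (p q a b : ℝ) :
    ∫ x in a..b, (p * x + q) = p * (b ^ 2 - a ^ 2) / 2 + q * (b - a) := by
  have hpx : IntervalIntegrable (fun x => p * x) volume a b :=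
    (continuous_const_mul p).intervalIntegrable a b
  rw [intervalIntegral.integral_add hpx intervalIntegrable_const,
    intervalIntegral.integral_const_mul, integral_id, intervalIntegral.integral_const, smul_eq_mul]
  ring

theorem integral_eq_add_add_of_eqOn_uIoc {f g₁ g₂ g₃ : ℝ → ℝ} {a b c d : ℝ}
    (hg₁ : IntervalIntegrable g₁ volume a b) (hg₂ : IntervalIntegrable g₂ volume b c)
    (hg₃ : IntervalIntegrable g₃ volume c d)
    (h₁ : EqOn f g₁ (Ι a b)) (h₂ : EqOn f g₂ (Ι b c)) (h₃ : EqOn f g₃ (Ι c d)) :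
    ∫ x in a..d, f x = (∫ x in a..b, g₁ x) + (∫ x in b..c, g₂ x) + ∫ x in c..d, g₃ x := by
  have hf₁ : IntervalIntegrable f volume a b := (intervalIntegrable_congr h₁).mpr hg₁
  have hf₂ : IntervalIntegrable f volume b c := (intervalIntegrable_congr h₂).mpr hg₂
  have hf₃ : IntervalIntegrable f volume c d := (intervalIntegrable_congr h₃).mpr hg₃
  rw [← intervalIntegral.integral_add_adjacent_intervals (hf₁.trans hf₂) hf₃,
    ← intervalIntegral.integral_add_adjacent_intervals hf₁ hf₂,
    intervalIntegral.integral_congr_ae (ae_of_all _ h₁),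
    intervalIntegral.integral_congr_ae (ae_of_all _ h₂),
    intervalIntegral.integral_congr_ae (ae_of_all _ h₃)]

/-- The luck increment `ΔL(x, y)` when Max bids `x` and Min bids `y`, with `μ = 1 + ε` and
`ν = 2W - 1`. -/
noncomputable def luckIncrement (W ε s β y x : ℝ) : ℝ :=
  if x ≤ y then 2 * s * (W * y - x) / β - (2 * W - 1) * s
  else if x ≤ W * y then 2 * s * (W * y - x) / β + (1 + ε) * s
  else 2 * (1 + ε) * s * (W * y - x) / β + (1 + ε) * s

section LuckIncrement

variable (W ε s β y : ℝ)

theorem luckIncrement_eqOn_low (hy : 0 ≤ y) :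
    EqOn (luckIncrement W ε s β y)
      (fun x => -(2 * s / β) * x + (2 * s * (W * y) / β - (2 * W - 1) * s)) (Ι 0 y) := by
  intro x hx
  rw [uIoc_of_le hy] at hx
  simp only [luckIncrement, if_pos hx.2]
  ring

theorem luckIncrement_eqOn_mid (hyW : y ≤ W * y) :
    EqOn (luckIncrement W ε s β y)
      (fun x => -(2 * s / β) * x + (2 * s * (W * y) / β + (1 + ε) * s)) (Ι y (W * y)) := by
  intro x hx
  rw [uIoc_of_le hyW] at hx
  simp only [luckIncrement, if_neg (not_le.2 hx.1), if_pos hx.2]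
  ring

theorem luckIncrement_eqOn_high (hyW : y ≤ W * y) (hyβ : W * y ≤ β) :
    EqOn (luckIncrement W ε s β y)
      (fun x => -(2 * (1 + ε) * s / β) * x + (2 * (1 + ε) * s * (W * y) / β + (1 + ε) * s))
      (Ι (W * y) β) := by
  intro x hx
  rw [uIoc_of_le hyβ] at hx
  simp only [luckIncrement, if_neg (not_le.2 (hyW.trans_lt hx.1)), if_neg (not_le.2 hx.1)]
  ring

theorem integral_luckIncrement (hW : 1 ≤ W) (hy : 0 ≤ y) (hyβ : W * y ≤ β) (hβ : β ≠ 0) :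
    ∫ x in (0 : ℝ)..β, luckIncrement W ε s β y x = ((2 * W - 1) - W ^ 2 * y / β) * ε * s * y := by
  have hyW : y ≤ W * y := le_mul_of_one_le_left hy hW
  have haffine (p q a b : ℝ) : IntervalIntegrable (fun x => p * x + q) volume a b :=
    ((continuous_const_mul p).add continuous_const).intervalIntegrable a b
  rw [integral_eq_add_add_of_eqOn_uIoc (haffine _ _ _ _) (haffine _ _ _ _) (haffine _ _ _ _)
    (luckIncrement_eqOn_low W ε s β y hy) (luckIncrement_eqOn_mid W ε s β y hyW)
    (luckIncrement_eqOn_high W ε s β y hyW hyβ)]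
  simp only [integral_mul_add_const]
  field_simp
  ring

theorem luck_coeff_nonneg (hW : 1 ≤ W) (hyβ : W * y ≤ β) (hβ : 0 < β) :
    0 ≤ (2 * W - 1) - W ^ 2 * y / β := by
  have hsplit : (2 * W - 1) - W ^ 2 * y / β = W * (β - W * y) / β + (W - 1) := by
    field_simp
    ring
  rw [hsplit]
  have hfrac : 0 ≤ W * (β - W * y) / β :=
    div_nonneg (mul_nonneg (by linarith) (by linarith)) hβ.le
  linarith

end LuckIncrement

theorem expected_luck_asymmetric_W_gt_one_general (W ε s β y : ℝ)
    (hW : 1 < W) (hε : 0 < ε) (hs : 0 < s)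
    (hβpos : 0 < β)
    (hy : 0 ≤ y) (hyβ : W * y ≤ β) :
    (∫ x in (0:ℝ)..β,
        (if x ≤ y then 2 * s * (W * y - x) / β - (2 * W - 1) * s
         else if x ≤ W * y then 2 * s * (W * y - x) / β + (1 + ε) * s
         else 2 * (1 + ε) * s * (W * y - x) / β + (1 + ε) * s))
      = ((2 * W - 1) - W ^ 2 * y / β) * ε * s * y
    ∧ 0 ≤ (1 / β) * ∫ x in (0:ℝ)..β,
        (if x ≤ y then 2 * s * (W * y - x) / β - (2 * W - 1) * s
         else if x ≤ W * y then 2 * s * (W * y - x) / β + (1 + ε) * s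
         else 2 * (1 + ε) * s * (W * y - x) / β + (1 + ε) * s) := by
  have hval := integral_luckIncrement W ε s β y hW.le hy hyβ hβpos.ne'
  simp only [luckIncrement] at hval
  refine ⟨hval, ?_⟩
  rw [hval]
  have hcoeff := luck_coeff_nonneg W β y hW.le hyβ hβpos
  positivity

/-- Expected luck is nonnegative for the `W > 1` asymmetric mixed strategy in
the uniform-bid case: with `β = (s/(W·S))·α·B` and `Wy ≤ β`, the expectation
over `x ~ Unif[0,β]` of the luck increment equals
`((2W-1) - W²y/β)·ε·s·y / β ≥ 0`. -/
theorem expected_luck_asymmetric_W_gt_one (W ε s S α B β y : ℝ)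
    (hW : 1 < W) (hε : 0 < ε) (hs : 0 < s) (hsS : s ≤ S)
    (hα : α ∈ Set.Ioo (0:ℝ) 1) (hB : 0 < B)
    (hβ : β = (s / (W * S)) * α * B) (hβpos : 0 < β)
    (hy : 0 ≤ y) (hyβ : W * y ≤ β) :
    (∫ x in (0:ℝ)..β,
        (if x ≤ y then 2 * s * (W * y - x) / β - (2 * W - 1) * s
         else if x ≤ W * y then 2 * s * (W * y - x) / β + (1 + ε) * s
         else 2 * (1 + ε) * s * (W * y - x) / β + (1 + ε) * s))
      = ((2 * W - 1) - W ^ 2 * y / β) * ε * s * y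
    ∧ 0 ≤ (1 / β) * ∫ x in (0:ℝ)..β,
        (if x ≤ y then 2 * s * (W * y - x) / β - (2 * W - 1) * s
         else if x ≤ W * y then 2 * s * (W * y - x) / β + (1 + ε) * s
         else 2 * (1 + ε) * s * (W * y - x) / β + (1 + ε) * s) :=
  expected_luck_asymmetric_W_gt_one_general W ε s β y hW hε hs hβpos hy hyβ
end
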